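/- arXiv:2405.13313 — 2 statements merged into one kernel-verified Lean document; each statement's English description precedes it below -/
import Mathlib

section
/- Let n ≥ 3 be an integer and c > 0. Let u : ℝ → ℝ be differentiable on (0, 1/4] and satisfy u(p) ≥ c/p^{n-2} for all p ∈ (0, 1/4]. Then for every θ with 0 < θ < c·(n−2), there exists a ∈ (0, 1/4] such that a^{n-1}·|u'(a)| ≥ θ. -/
/-!
If `a^(k+1)|u'(a)| ≤ θ` on `(0, b]`, then `u - (θ/k) a^(-k)` has nonnegative derivative there, so
`u(p) ≤ u(b) + (θ/k) p^(-k)`. With `k = n - 2` and `θ < c k` this is incompatible with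
`u(p) ≥ c p^(-k)` as `p → 0⁺`.
-/

open Set Filter Topology

theorem monotoneOn_sub_div_pow_of_pow_mul_abs_deriv_le {u u' : ℝ → ℝ} {b θ : ℝ} {k : ℕ}
    (hk : k ≠ 0) (hu : ∀ x ∈ Ioc 0 b, HasDerivAt u (u' x) x)
    (hθ : ∀ x ∈ Ioc 0 b, x ^ (k + 1) * |u' x| ≤ θ) :
    MonotoneOn (fun x => u x - θ / k * (x ^ k)⁻¹) (Ioc 0 b) := by
  have hderiv : ∀ x ∈ Ioc 0 b,
      HasDerivAt (fun x => u x - θ / k * (x ^ k)⁻¹) (u' x + θ * (x ^ (k + 1))⁻¹) x := by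
    intro x hx
    have hpow := (hasDerivAt_zpow (-k) x (Or.inl hx.1.ne')).const_mul (θ / k)
    simp only [zpow_neg, zpow_natCast] at hpow
    refine ((hu x hx).sub hpow).congr_deriv ?_
    rw [show (-(k : ℤ) - 1) = -((k + 1 : ℕ) : ℤ) by push_cast; ring, zpow_neg, zpow_natCast]
    field_simp
    push_cast
    ring
  refine monotoneOn_of_hasDerivWithinAt_nonneg (convex_Ioc 0 b)
    (fun x hx => (hderiv x hx).continuousAt.continuousWithinAt)
    (fun x hx => (hderiv x (interior_subset hx)).hasDerivWithinAt) fun x hx => ?_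
  have hx := interior_subset hx
  have hpos : 0 < x ^ (k + 1) := pow_pos hx.1 _
  have : -u' x ≤ θ * (x ^ (k + 1))⁻¹ := by
    rw [← div_eq_mul_inv, le_div_iff₀ hpos]
    nlinarith [neg_le_abs (u' x), hθ x hx]
  linarith

theorem tendsto_inv_pow_nhdsGT_zero {k : ℕ} (hk : k ≠ 0) :
    Tendsto (fun x : ℝ => (x ^ k)⁻¹) (𝓝[>] 0) atTop := by
  simpa only [Function.comp_def, inv_pow] using
    (tendsto_pow_atTop hk).comp (tendsto_inv_nhdsGT_zero (𝕜 := ℝ))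

theorem scaled_derivative_lower_bound_general
    (n : ℕ) (hn : 3 ≤ n) (c : ℝ)
    (u u' : ℝ → ℝ)
    (hu : ∀ p ∈ Set.Ioc (0:ℝ) (1/4), HasDerivAt u (u' p) p)
    (hlow : ∀ p ∈ Set.Ioc (0:ℝ) (1/4), c / p ^ (n - 2) ≤ u p) :
    ∀ θ : ℝ, 0 < θ → θ < c * ((n : ℝ) - 2) →
      ∃ a ∈ Set.Ioc (0:ℝ) (1/4), θ ≤ a ^ (n - 1) * |u' a| := by
  intro θ _ hθc
  by_contra! hsmall
  obtain ⟨k, rfl⟩ : ∃ k, n = k + 2 := ⟨n - 2, by omega⟩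
  have hk : k ≠ 0 := by omega
  simp only [Nat.add_sub_cancel, Nat.add_succ_sub_one, Nat.cast_add, Nat.cast_ofNat,
    add_sub_cancel_right] at hlow hsmall hθc
  have hmono := monotoneOn_sub_div_pow_of_pow_mul_abs_deriv_le hk hu fun x hx => (hsmall x hx).le
  have hupper : ∀ p ∈ Ioc (0:ℝ) (1/4), u p - θ / k * (p ^ k)⁻¹ ≤ u (1/4) - θ / k * ((1/4) ^ k)⁻¹ :=
    fun p hp => hmono hp (right_mem_Ioc.2 (by norm_num)) hp.2
  have hgap : 0 < c - θ / k := by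
    rw [sub_pos, div_lt_iff₀ (by positivity)]; exact hθc
  obtain ⟨p, hp, hbig⟩ := (Filter.Eventually.and (Ioc_mem_nhdsGT (by norm_num : (0:ℝ) < 1/4))
    (((tendsto_inv_pow_nhdsGT_zero hk).const_mul_atTop hgap).eventually_gt_atTop
      (u (1/4) - θ / k * ((1/4) ^ k)⁻¹))).exists
  have hlow_p : c * (p ^ k)⁻¹ ≤ u p := div_eq_mul_inv c _ ▸ hlow p hp
  linarith [hupper p hp]

/-- If `u(p) ≥ c/p^(n-2)` on `(0, 1/4]`, then for every `0 < θ < c(n−2)` there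
is a point `a ∈ (0, 1/4]` where the scaled derivative satisfies
`a^(n-1)·|u'(a)| ≥ θ`. -/
theorem scaled_derivative_lower_bound
    (n : ℕ) (hn : 3 ≤ n) (c : ℝ) (hc : 0 < c)
    (u u' : ℝ → ℝ)
    (hu : ∀ p ∈ Set.Ioc (0:ℝ) (1/4), HasDerivAt u (u' p) p)
    (hlow : ∀ p ∈ Set.Ioc (0:ℝ) (1/4), c / p ^ (n - 2) ≤ u p) :
    ∀ θ : ℝ, 0 < θ → θ < c * ((n : ℝ) - 2) →
      ∃ a ∈ Set.Ioc (0:ℝ) (1/4), θ ≤ a ^ (n - 1) * |u' a| :=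
  scaled_derivative_lower_bound_general n hn c u u' hu hlow
end

section
/- Let n ≥ 3 and m ≥ 100 be integers and let b_{1,m} : (0,1) → ℝ be the truncated radial drift profile with C = 1, i.e. b_{1,m}(r) = 1/(1−r) for 0 < r ≤ 1 − 1/m and b_{1,m}(r) = m for 1 − 1/m < r < 1. Let u : ℝ → ℝ be twice differentiable on (0,1), continuous on (0,1] with u(1) = 0, satisfy u''(r) + ((n-1)/r)·u'(r) − b_{1,m}(r)·u'(r) = 0 for all r ∈ (0,1), and suppose there exist C₀ > 0 and a ∈ (0, 1/4] such that u'(a) ≤ 0 and a^{n-1}·|u'(a)| ≥ C₀. Then u(1/2) ≥ (C₀/2)·log(m/2). -/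
/-!
Write `w(r) = r^(n-1) u'(r)`; the equation says `w' = b_{1,m} w`. For `r ≤ t := 1 - 1/m` the drift
is `1/(1-r)`, so `(1-r) w(r)` is constant there, and for `r ≥ t` it is `m`, so `e^{-mr} w(r)` is
constant. The first identity, started at `a`, gives `u'(r) ≤ -(C₀/2)/(1-r)` on `[1/2, t]`; the
second keeps `u' < 0` on `[t, 1)`, so `u(t) ≥ u(1) = 0`. Integrating the bound over `[1/2, t]`
yields `u(1/2) ≥ (C₀/2) log((1/2)/(1-t)) = (C₀/2) log(m/2)`.
-/

open Set

/-- The truncated radial drift profile with `C = 1`: `b_{1,m}(r) = 1/(1−r)` for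
`r ≤ 1 − 1/m` and `b_{1,m}(r) = m` for `1 − 1/m < r`. -/
noncomputable def driftProfileOne (m : ℕ) (r : ℝ) : ℝ :=
  if r ≤ 1 - 1 / (m : ℝ) then 1 / (1 - r) else (m : ℝ)

theorem driftProfileOne_of_le {m : ℕ} {r : ℝ} (hr : r ≤ 1 - 1 / (m : ℝ)) :
    driftProfileOne m r = 1 / (1 - r) :=
  if_pos hr

theorem driftProfileOne_of_ge {m : ℕ} {r : ℝ} (hr : 1 - 1 / (m : ℝ) ≤ r) :
    driftProfileOne m r = m := by
  unfold driftProfileOne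
  split_ifs with h
  · rw [le_antisymm h hr, sub_sub_cancel, one_div_one_div]
  · rfl

theorem le_of_hasDerivAt_nonpos {u u' : ℝ → ℝ} {x y : ℝ} (hxy : x ≤ y)
    (hcont : ContinuousOn u (Icc x y)) (hu : ∀ r ∈ Ioo x y, HasDerivAt u (u' r) r)
    (hu' : ∀ r ∈ Ioo x y, u' r ≤ 0) : u y ≤ u x :=
  antitoneOn_of_hasDerivWithinAt_nonpos (convex_Icc x y) hcont
    (fun r hr => (hu r (by rwa [interior_Icc] at hr)).hasDerivWithinAt)
    (fun r hr => hu' r (by rwa [interior_Icc] at hr)) ⟨le_rfl, hxy⟩ ⟨hxy, le_rfl⟩ hxy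

theorem add_mul_log_le_of_deriv_le {u u' : ℝ → ℝ} {c x y : ℝ} (hxy : x ≤ y) (hy : y < 1)
    (hu : ∀ r ∈ Icc x y, HasDerivAt u (u' r) r)
    (hbound : ∀ r ∈ Ioo x y, u' r ≤ -(c / (1 - r))) :
    u y + c * Real.log ((1 - x) / (1 - y)) ≤ u x := by
  have hderiv : ∀ r ∈ Icc x y,
      HasDerivAt (fun s => u s - c * Real.log (1 - s)) (u' r + c / (1 - r)) r := fun r hr => by
    have hr1 : 1 - r ≠ 0 := by linarith [hr.2]
    refine ((hu r hr).sub ((((hasDerivAt_id r).const_sub 1).log hr1).const_mul c)).congr_deriv ?_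
    simp only [id]
    field_simp
    ring
  have hanti := le_of_hasDerivAt_nonpos hxy
    (fun r hr => (hderiv r hr).continuousAt.continuousWithinAt)
    (fun r hr => hderiv r (Ioo_subset_Icc_self hr)) fun r hr => by linarith [hbound r hr]
  rw [Real.log_div (by linarith) (by linarith)]
  linarith

theorem mul_eq_mul_of_integrating_factor {w E β : ℝ → ℝ} {x y : ℝ}
    (hw : ∀ r ∈ Icc x y, HasDerivAt w (β r * w r) r)
    (hE : ∀ r ∈ Icc x y, HasDerivAt E (-(β r * E r)) r) :
    ∀ r ∈ Icc x y, E r * w r = E x * w x := by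
  have hprod : ∀ r ∈ Icc x y, HasDerivAt (fun s => E s * w s) 0 r := fun r hr =>
    ((hE r hr).mul (hw r hr)).congr_deriv (by ring)
  exact constant_of_has_deriv_right_zero
    (fun r hr => (hprod r hr).continuousAt.continuousWithinAt)
    fun r hr => (hprod r (Ico_subset_Icc_self hr)).hasDerivWithinAt

theorem hasDerivAt_pow_mul_of_ode {k : ℕ} {β u' u'' : ℝ → ℝ} {r : ℝ} (hr : r ≠ 0)
    (hu' : HasDerivAt u' (u'' r) r) (hode : u'' r + k / r * u' r - β r * u' r = 0) :
    HasDerivAt (fun s => s ^ k * u' s) (β r * (r ^ k * u' r)) r := by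
  refine ((hasDerivAt_pow k r).mul hu').congr_deriv ?_
  rw [show u'' r = β r * u' r - k / r * u' r by linarith]
  cases k with
  | zero => simp
  | succ k => rw [Nat.add_sub_cancel]; field_simp; ring

def IsDriftFlux (m : ℕ) (w : ℝ → ℝ) : Prop :=
  ∀ r ∈ Ioo (0 : ℝ) 1, HasDerivAt w (driftProfileOne m r * w r) r

theorem isDriftFlux_pow_mul {k m : ℕ} {u' u'' : ℝ → ℝ}
    (hu' : ∀ r ∈ Ioo (0 : ℝ) 1, HasDerivAt u' (u'' r) r)
    (hode : ∀ r ∈ Ioo (0 : ℝ) 1, u'' r + k / r * u' r - driftProfileOne m r * u' r = 0) :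
    IsDriftFlux m fun s => s ^ k * u' s := fun r hr =>
  hasDerivAt_pow_mul_of_ode hr.1.ne' (hu' r hr) (hode r hr)

namespace IsDriftFlux

variable {m : ℕ} {w : ℝ → ℝ}

theorem one_sub_mul_eq (hw : IsDriftFlux m w) (hm : m ≠ 0) {x y : ℝ} (hx : 0 < x)
    (hy : y ≤ 1 - 1 / (m : ℝ)) : ∀ r ∈ Icc x y, (1 - r) * w r = (1 - x) * w x := by
  have hm1 : 0 < 1 / (m : ℝ) := by positivity
  refine mul_eq_mul_of_integrating_factor (β := fun r => 1 / (1 - r))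
    (fun r hr => ?_) fun r hr => ?_
  · rw [← driftProfileOne_of_le (hr.2.trans hy)]
    exact hw r ⟨hx.trans_le hr.1, by linarith [hr.2]⟩
  · have hr1 : 1 - r ≠ 0 := by linarith [hr.2]
    exact ((hasDerivAt_id r).const_sub 1).congr_deriv (by field_simp)

theorem exp_mul_eq (hw : IsDriftFlux m w) (hm : 1 < m) {x y : ℝ} (hx : 1 - 1 / (m : ℝ) ≤ x)
    (hy : y < 1) : ∀ r ∈ Icc x y, Real.exp (-(m * r)) * w r = Real.exp (-(m * x)) * w x := by
  have hm1 : 1 / (m : ℝ) < 1 := by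
    rw [div_lt_one (by positivity)]; exact_mod_cast hm
  refine mul_eq_mul_of_integrating_factor (β := fun _ => (m : ℝ))
    (fun r hr => ?_) fun r _ => ?_
  · rw [← driftProfileOne_of_ge (hx.trans hr.1)]
    exact hw r ⟨by linarith [hr.1], by linarith [hr.2]⟩
  · exact (((hasDerivAt_id r).const_mul (m : ℝ)).neg.exp).congr_deriv
      (by simp only [Pi.neg_apply, id, mul_one]; ring)

theorem neg_of_ge (hw : IsDriftFlux m w) (hm : 1 < m) {x : ℝ} (hx : 1 - 1 / (m : ℝ) ≤ x)
    (hwx : w x < 0) {r : ℝ} (hxr : x ≤ r) (hr : r < 1) : w r < 0 := by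
  have hexp := hw.exp_mul_eq hm hx hr r ⟨hxr, le_rfl⟩
  exact neg_of_mul_neg_right (hexp ▸ mul_neg_of_pos_of_neg (Real.exp_pos _) hwx)
    (Real.exp_pos _).le

end IsDriftFlux

theorem le_neg_div_of_one_sub_mul_pow_mul_le {k : ℕ} {r v c : ℝ} (hr0 : 0 < r) (hr1 : r < 1)
    (hc : 0 ≤ c) (h : (1 - r) * (r ^ k * v) ≤ -c) : v ≤ -(c / (1 - r)) := by
  have hrk : r ^ k ≤ 1 := pow_le_one₀ hr0.le hr1.le
  have hrk0 : 0 < r ^ k := pow_pos hr0 k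
  have h1r : 0 < 1 - r := by linarith
  rw [le_neg, div_le_iff₀ h1r]
  nlinarith [mul_pos hrk0 h1r]

/-- Quantitative ODE form of the counterexample: a radial solution with
`u(1) = 0` and a point `a ∈ (0,1/4]` with `u'(a) ≤ 0` and
`a^(n-1)|u'(a)| ≥ C₀` satisfies `u(1/2) ≥ (C₀/2)·log(m/2)`. -/
theorem value_lower_bound_from_scaled_derivative
    (n : ℕ) (hn : 3 ≤ n) (m : ℕ) (hm : 100 ≤ m)
    (u u' u'' : ℝ → ℝ)
    (hu : ∀ r ∈ Set.Ioo (0:ℝ) 1, HasDerivAt u (u' r) r)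
    (hu' : ∀ r ∈ Set.Ioo (0:ℝ) 1, HasDerivAt u' (u'' r) r)
    (hcont : ContinuousOn u (Set.Ioc 0 1)) (hu1 : u 1 = 0)
    (hode : ∀ r ∈ Set.Ioo (0:ℝ) 1,
      u'' r + ((n : ℝ) - 1) / r * u' r - driftProfileOne m r * u' r = 0)
    (C₀ : ℝ) (hC₀ : 0 < C₀) (a : ℝ) (ha : a ∈ Set.Ioc (0:ℝ) (1/4))
    (ha' : u' a ≤ 0) (ha'' : C₀ ≤ a ^ (n - 1) * |u' a|) :
    (C₀ / 2) * Real.log ((m : ℝ) / 2) ≤ u (1/2) := by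
  obtain ⟨k, rfl⟩ : ∃ k, n = k + 1 := ⟨n - 1, by omega⟩
  rw [Nat.add_sub_cancel, abs_of_nonpos ha'] at ha''
  have hm100 : (100 : ℝ) ≤ m := by exact_mod_cast hm
  set t : ℝ := 1 - 1 / (m : ℝ) with ht
  have hm_inv : 1 / (m : ℝ) ≤ 1 / 100 := one_div_le_one_div_of_le (by norm_num) hm100
  have ht_half : 1 / 2 ≤ t := by linarith
  have ht1 : t < 1 := by simp only [ht, sub_lt_self_iff]; positivity
  have hw : IsDriftFlux m fun s => s ^ k * u' s :=
    isDriftFlux_pow_mul hu' fun r hr => by simpa using hode r hr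
  have hbulk : ∀ r ∈ Icc a t, (1 - r) * (r ^ k * u' r) ≤ -(C₀ / 2) := fun r hr => by
    rw [hw.one_sub_mul_eq (by omega) ha.1 le_rfl r hr]
    nlinarith [ha.2]
  have hbound : ∀ r ∈ Ioo (1 / 2) t, u' r ≤ -(C₀ / 2 / (1 - r)) := fun r hr =>
    le_neg_div_of_one_sub_mul_pow_mul_le (by linarith [hr.1]) (by linarith [hr.2])
      (by positivity) (hbulk r ⟨by linarith [ha.2, hr.1], hr.2.le⟩)
  have hwt : t ^ k * u' t < 0 :=
    neg_of_mul_neg_right ((hbulk t ⟨by linarith [ha.2], le_rfl⟩).trans_lt (by linarith))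
      (by linarith)
  have hut : u 1 ≤ u t := le_of_hasDerivAt_nonpos ht1.le
    (hcont.mono fun r hr => ⟨by linarith [hr.1], hr.2⟩)
    (fun r hr => hu r ⟨by linarith [hr.1], hr.2⟩)
    fun r hr => (neg_of_mul_neg_right (hw.neg_of_ge (by omega) le_rfl hwt hr.1.le hr.2)
      (pow_pos (by linarith [hr.1]) k).le).le
  have hlog := add_mul_log_le_of_deriv_le ht_half ht1
    (fun r hr => hu r ⟨by linarith [hr.1], by linarith [hr.2]⟩) hbound
  rw [show (1 - 1 / 2) / (1 - t) = (m : ℝ) / 2 by rw [ht]; field_simp; ring] at hlog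
  linarith
end
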